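/- Fix ε ∈ (0,1) and a nonempty index set Γ. Suppose that for each A > 0 local thresholds a = a(A) > 0 and b = b(A) > 0 are given with a → ∞, b → ∞, a/A → 0, limsup a/b < ∞ and limsup b/a < ∞ as A → ∞, and that for each γ ∈ Γ and each A, (Y_n)_{n≥1} are i.i.d. random variables under P_γ taking only the values a and −b, with α̃_γ := P_γ(Y_1 = a) satisfying sup_{γ∈Γ} α̃_γ = e^{−(1+o(1)) a} as A → ∞. Then, uniformly in ρ ∈ [ε, 1] and γ ∈ Γ, P_γ(sup_{N ≥ 1} Σ_{n=1}^{N} Y_n ≥ ρ A) ≤ e^{−(1+o(1)) ρ A} as A → ∞; that is, for every δ > 0 there exists A_0 such that for all A ≥ A_0, all ρ ∈ [ε,1] and all γ ∈ Γ, P_γ(sup_{N≥1} Σ_{n=1}^N Y_n ≥ ρA) ≤ e^{−(1−δ) ρ A}. -/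

import Mathlib

/-!
Chernoff bound with the exponent `t = 1 - η / 2`, `η = min δ 1`. A step equals `a` with
probability at most `α ≤ e^{-(1 - η/4) a}`, so `E e^{tY} ≤ e^{ta} α + e^{-tb} ≤ e^{-ηa/4} + e^{-b/2}`,
which is at most `1/2` once `a` and `b` are large. Then `P(S_N ≥ ρA) ≤ e^{-tρA} 2^{-N}`, and the
union bound over `N` costs only the factor `∑_{N ≥ 1} 2^{-N} = 1`.
-/

open MeasureTheory ProbabilityTheory Filter

open Real Finset

section TwoValued

variable {Ω : Type*} {X : Ω → ℝ} {x y : ℝ}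

theorem exp_mul_eq_indicator_add_indicator (hxy : ∀ ω, X ω = x ∨ X ω = y) (t : ℝ) :
    (fun ω => exp (t * X ω)) = fun ω => {ω | X ω = x}.indicator (fun _ => exp (t * x)) ω
      + {ω | X ω = x}ᶜ.indicator (fun _ => exp (t * y)) ω := by
  funext ω
  by_cases h : X ω = x
  · simp [h]
  · rw [Set.indicator_of_notMem (s := {ω | X ω = x}) h,
      Set.indicator_of_mem (s := {ω | X ω = x}ᶜ) h, (hxy ω).resolve_left h, zero_add]

variable [MeasurableSpace Ω] {μ : Measure Ω}

theorem integrable_exp_mul_of_forall_eq_or_eq [IsFiniteMeasure μ] (hX : Measurable X)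
    (hxy : ∀ ω, X ω = x ∨ X ω = y) (t : ℝ) : Integrable (fun ω => exp (t * X ω)) μ := by
  have hS : MeasurableSet {ω | X ω = x} := hX (measurableSet_singleton x)
  rw [exp_mul_eq_indicator_add_indicator hxy t]
  exact ((integrable_const _).indicator hS).add ((integrable_const _).indicator hS.compl)

theorem mgf_eq_of_forall_eq_or_eq [IsProbabilityMeasure μ] (hX : Measurable X)
    (hxy : ∀ ω, X ω = x ∨ X ω = y) (t : ℝ) :
    mgf X μ t = exp (t * x) * μ.real {ω | X ω = x}
      + exp (t * y) * (1 - μ.real {ω | X ω = x}) := by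
  have hS : MeasurableSet {ω | X ω = x} := hX (measurableSet_singleton x)
  rw [mgf, exp_mul_eq_indicator_add_indicator hxy t, integral_add
    ((integrable_const _).indicator hS) ((integrable_const _).indicator hS.compl),
    integral_indicator_const _ hS, integral_indicator_const _ hS.compl,
    probReal_compl_eq_one_sub hS, smul_eq_mul, smul_eq_mul, mul_comm, mul_comm (1 - _)]

end TwoValued

section RandomWalk

variable {Ω : Type*} [MeasurableSpace Ω] {μ : Measure Ω} {X : ℕ → Ω → ℝ} {t r : ℝ}

theorem measureReal_le_sum_range_le_exp_mul_pow (hindep : iIndepFun X μ)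
    (hmeas : ∀ i, Measurable (X i)) (hint : ∀ i, Integrable (fun ω => exp (t * X i ω)) μ)
    (ht : 0 ≤ t) (hr : ∀ i, mgf (X i) μ t ≤ r) (c : ℝ) (N : ℕ) :
    μ.real {ω | c ≤ ∑ i ∈ range N, X i ω} ≤ exp (-t * c) * r ^ N := by
  have := hindep.isProbabilityMeasure
  have hmgf : mgf (∑ i ∈ range N, X i) μ t ≤ r ^ N := by
    rw [hindep.mgf_sum hmeas]
    exact (prod_le_prod (fun i _ => mgf_nonneg) fun i _ => hr i).trans_eq (by simp)
  calc μ.real {ω | c ≤ ∑ i ∈ range N, X i ω}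
      = μ.real {ω | c ≤ (∑ i ∈ range N, X i) ω} := by simp only [Finset.sum_apply]
    _ ≤ exp (-t * c) * mgf (∑ i ∈ range N, X i) μ t :=
        measure_ge_le_exp_mul_mgf c ht (hindep.integrable_exp_mul_sum hmeas fun i _ => hint i)
    _ ≤ exp (-t * c) * r ^ N := by gcongr

theorem measure_exists_le_sum_range_succ_le (hindep : iIndepFun X μ)
    (hmeas : ∀ i, Measurable (X i)) (hint : ∀ i, Integrable (fun ω => exp (t * X i ω)) μ)
    (ht : 0 ≤ t) (hr : ∀ i, mgf (X i) μ t ≤ r) (hr1 : r < 1) (c : ℝ) :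
    μ {ω | ∃ N, c ≤ ∑ i ∈ range (N + 1), X i ω}
      ≤ ENNReal.ofReal (exp (-t * c) * (r / (1 - r))) := by
  have := hindep.isProbabilityMeasure
  have hr0 : 0 ≤ r := mgf_nonneg.trans (hr 0)
  have hgeom : HasSum (fun N : ℕ => exp (-t * c) * r ^ (N + 1))
      (exp (-t * c) * (r / (1 - r))) := by
    have h := (hasSum_geometric_of_lt_one hr0 hr1).mul_left (exp (-t * c) * r)
    rw [show exp (-t * c) * r * (1 - r)⁻¹ = exp (-t * c) * (r / (1 - r)) by ring] at h
    simpa only [pow_succ', mul_assoc] using h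
  calc μ {ω | ∃ N, c ≤ ∑ i ∈ range (N + 1), X i ω}
      = μ (⋃ N, {ω | c ≤ ∑ i ∈ range (N + 1), X i ω}) := by rw [Set.ofPred_exists]
    _ ≤ ∑' N, μ {ω | c ≤ ∑ i ∈ range (N + 1), X i ω} := measure_iUnion_le _
    _ ≤ ∑' N, ENNReal.ofReal (exp (-t * c) * r ^ (N + 1)) := by
        gcongr with N
        rw [← ofReal_measureReal]
        exact ENNReal.ofReal_le_ofReal
          (measureReal_le_sum_range_le_exp_mul_pow hindep hmeas hint ht hr c (N + 1))
    _ = ENNReal.ofReal (exp (-t * c) * (r / (1 - r))) := by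
        rw [← ENNReal.ofReal_tsum_of_nonneg (fun N => by positivity) hgeom.summable,
          hgeom.tsum_eq]

theorem measure_exists_le_sum_Icc_le_of_two_valued {Y : ℕ → Ω → ℝ} {a b α : ℝ}
    (hmeas : ∀ n, Measurable (Y n)) (hvals : ∀ n, 1 ≤ n → ∀ ω, Y n ω = a ∨ Y n ω = -b)
    (hindep : iIndepFun (fun n => Y (n + 1)) μ)
    (hident : ∀ n, 1 ≤ n → μ.map (Y n) = μ.map (Y 1))
    (hα : μ.real {ω | Y 1 ω = a} ≤ α) (ht : 0 ≤ t)
    (hsmall : exp (t * a) * α + exp (-(t * b)) ≤ 1 / 2) (c : ℝ) :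
    μ {ω | ∃ N, 1 ≤ N ∧ c ≤ ∑ n ∈ Icc 1 N, Y n ω} ≤ ENNReal.ofReal (exp (-t * c)) := by
  have := hindep.isProbabilityMeasure
  have hmgf : ∀ n, mgf (Y (n + 1)) μ t ≤ 1 / 2 := fun n => by
    rw [← mgf_id_map (hmeas _).aemeasurable, hident (n + 1) (by omega),
      mgf_id_map (hmeas 1).aemeasurable, mgf_eq_of_forall_eq_or_eq (hmeas 1) (hvals 1 le_rfl) t]
    have hpos : exp (t * a) * μ.real {ω | Y 1 ω = a} ≤ exp (t * a) * α :=
      mul_le_mul_of_nonneg_left hα (exp_pos _).le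
    have hneg : exp (t * -b) * (1 - μ.real {ω | Y 1 ω = a}) ≤ exp (-(t * b)) := by
      rw [mul_neg]
      exact mul_le_of_le_one_right (exp_pos _).le (by simp)
    linarith
  have hshift : ∀ N ω, ∑ n ∈ Icc 1 N, Y n ω = ∑ i ∈ range N, Y (i + 1) ω := fun N ω => by
    rw [← Ico_add_one_right_eq_Icc, sum_Ico_eq_sum_range]
    simp [add_comm]
  have hsets : {ω | ∃ N, 1 ≤ N ∧ c ≤ ∑ n ∈ Icc 1 N, Y n ω}
      = {ω | ∃ N, c ≤ ∑ i ∈ range (N + 1), Y (i + 1) ω} := by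
    ext ω
    simp only [Set.mem_ofPred_eq, hshift]
    constructor
    · rintro ⟨N, hN, h⟩
      exact ⟨N - 1, by rwa [Nat.sub_add_cancel hN]⟩
    · rintro ⟨N, h⟩
      exact ⟨N + 1, by omega, h⟩
  calc μ {ω | ∃ N, 1 ≤ N ∧ c ≤ ∑ n ∈ Icc 1 N, Y n ω}
      ≤ ENNReal.ofReal (exp (-t * c) * (1 / 2 / (1 - 1 / 2))) := by
        rw [hsets]
        exact measure_exists_le_sum_range_succ_le hindep (fun n => hmeas _)
          (fun n => integrable_exp_mul_of_forall_eq_or_eq (hmeas _) (hvals _ (by omega)) t)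
          ht hmgf (by norm_num) c
    _ = ENNReal.ofReal (exp (-t * c)) := by norm_num

end RandomWalk

theorem eventually_le_exp_neg_mul_of_tendsto_log_div {α : Type*} {l : Filter α} {f g : α → ℝ}
    (hg : ∀ᶠ x in l, 0 < g x) (h : Tendsto (fun x => log (f x) / -g x) l (nhds 1)) {κ : ℝ}
    (hκ : κ < 1) : ∀ᶠ x in l, f x ≤ exp (-(κ * g x)) := by
  filter_upwards [hg, h.eventually (eventually_gt_nhds hκ)] with x hgx hx
  rw [lt_div_iff_of_neg (neg_neg_of_pos hgx)] at hx
  exact (le_exp_log _).trans (exp_le_exp.2 (by linarith))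

theorem exp_mul_add_exp_neg_mul_le_half {η a b α : ℝ} (hη1 : η ≤ 1)
    (hα : α ≤ exp (-((1 - η / 4) * a))) (ha : 4 * log 4 ≤ a * η) (hb : 2 * log 4 ≤ b) :
    exp ((1 - η / 2) * a) * α + exp (-((1 - η / 2) * b)) ≤ 1 / 2 := by
  have hquarter : exp (-log 4) = 1 / 4 := by rw [exp_neg, exp_log (by norm_num)]; norm_num
  have hlog4 : 0 < log 4 := log_pos (by norm_num)
  have hup : exp ((1 - η / 2) * a) * α ≤ 1 / 4 :=
    calc _ ≤ exp ((1 - η / 2) * a) * exp (-((1 - η / 4) * a)) := by gcongr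
      _ = exp (-(η / 4 * a)) := by rw [← exp_add]; ring_nf
      _ ≤ 1 / 4 := hquarter ▸ exp_le_exp.2 (by linarith)
  have hdown : exp (-((1 - η / 2) * b)) ≤ 1 / 4 := hquarter ▸ exp_le_exp.2 (by nlinarith)
  linarith

theorem lts_local_exponential_bound_general
    {Ω : Type*} [MeasurableSpace Ω] {ι : Type*}
    (ε : ℝ) (hε : ε ∈ Set.Ioo (0 : ℝ) 1)
    -- local thresholds, as functions of the global threshold `A`
    (a b : ℝ → ℝ)
    (ha : Tendsto a atTop atTop) (hb : Tendsto b atTop atTop)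
    -- for each `γ ∈ ι` and each `A`, a probability measure and random variables `Y_n`
    (P : ι → ℝ → Measure Ω)
    (Y : ℝ → ℕ → Ω → ℝ)
    (hYmeas : ∀ A n, Measurable (Y A n))
    -- `(Y_n)_{n≥1}` take only the two values `a A` and `-b A` …
    (hvals : ∀ γ : ι, ∀ A > (0 : ℝ), ∀ n, 1 ≤ n → ∀ ω, Y A n ω = a A ∨ Y A n ω = -b A)
    -- … and are i.i.d. under `P γ A`
    (hindep : ∀ (γ : ι) (A : ℝ),
      iIndepFun (fun n : ℕ => Y A (n + 1)) (P γ A))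
    (hident : ∀ (γ : ι) (A : ℝ), ∀ n, 1 ≤ n → (P γ A).map (Y A n) = (P γ A).map (Y A 1))
    -- with `α̃_γ = P_γ(Y_1 = a)` satisfying `sup_γ α̃_γ = e^{-(1+o(1))a}` as `A → ∞`:
    (halpha : Tendsto
      (fun A => Real.log (⨆ γ : ι, ((P γ A) {ω | Y A 1 ω = a A}).toReal) / (-a A))
      atTop (nhds 1)) :
    -- conclusion: for every `δ > 0` there is `A₀` with, for all `A ≥ A₀`, `ρ ∈ [ε,1]`, `γ`:
    ∀ δ > (0 : ℝ), ∃ A₀ : ℝ, ∀ A ≥ A₀, ∀ ρ ∈ Set.Icc ε 1, ∀ γ : ι,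
      (P γ A) {ω | ∃ N, 1 ≤ N ∧ ρ * A ≤ ∑ n ∈ Finset.Icc 1 N, Y A n ω}
        ≤ ENNReal.ofReal (Real.exp (-((1 - δ) * ρ * A))) := by
  intro δ hδ
  set η := min δ 1
  have hη : 0 < η := lt_min hδ one_pos
  have hηδ : η ≤ δ := min_le_left δ 1
  have hη1 : η ≤ 1 := min_le_right δ 1
  obtain ⟨A₀, hA₀⟩ := eventually_atTop.1 <| (eventually_gt_atTop 0).and <|
    (eventually_le_exp_neg_mul_of_tendsto_log_div (ha.eventually_gt_atTop 0) halpha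
      (κ := 1 - η / 4) (by linarith)).and <|
    (ha.eventually_ge_atTop (4 * log 4 / η)).and (hb.eventually_ge_atTop (2 * log 4))
  refine ⟨A₀, fun A hA ρ hρ γ => ?_⟩
  obtain ⟨hA, hα, ha4, hb4⟩ := hA₀ A hA
  rw [div_le_iff₀ hη] at ha4
  have hbdd : BddAbove (Set.range fun γ : ι => ((P γ A) {ω | Y A 1 ω = a A}).toReal) := by
    refine ⟨1, ?_⟩
    rintro _ ⟨γ', rfl⟩
    have := (hindep γ' A).isProbabilityMeasure
    exact measureReal_le_one
  have hρA : 0 ≤ ρ * A := mul_nonneg (hε.1.trans_le hρ.1).le hA.le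
  calc _ ≤ ENNReal.ofReal (exp (-(1 - η / 2) * (ρ * A))) :=
        measure_exists_le_sum_Icc_le_of_two_valued (hYmeas A) (hvals γ A hA) (hindep γ A)
          (hident γ A) (le_ciSup hbdd γ) (by linarith)
          (exp_mul_add_exp_neg_mul_le_half hη1 hα ha4 hb4) (ρ * A)
    _ ≤ _ := ENNReal.ofReal_le_ofReal <| exp_le_exp.2 <| by
        nlinarith [mul_le_mul_of_nonneg_right (show 1 - δ ≤ 1 - η / 2 by linarith) hρA]

theorem lts_local_exponential_bound
    {Ω : Type*} [MeasurableSpace Ω] {ι : Type*} [Nonempty ι]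
    (ε : ℝ) (hε : ε ∈ Set.Ioo (0 : ℝ) 1)
    -- local thresholds, as functions of the global threshold `A`
    (a b : ℝ → ℝ)
    (hapos : ∀ A > (0 : ℝ), 0 < a A) (hbpos : ∀ A > (0 : ℝ), 0 < b A)
    (ha : Tendsto a atTop atTop) (hb : Tendsto b atTop atTop)
    (haA : Tendsto (fun A => a A / A) atTop (nhds 0))
    (hab : IsBoundedUnder (· ≤ ·) atTop (fun A => a A / b A))
    (hba : IsBoundedUnder (· ≤ ·) atTop (fun A => b A / a A))
    -- for each `γ ∈ ι` and each `A`, a probability measure and random variables `Y_n`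
    (P : ι → ℝ → Measure Ω) (hP : ∀ γ A, IsProbabilityMeasure (P γ A))
    (Y : ℝ → ℕ → Ω → ℝ)
    (hYmeas : ∀ A n, Measurable (Y A n))
    -- `(Y_n)_{n≥1}` take only the two values `a A` and `-b A` …
    (hvals : ∀ γ : ι, ∀ A > (0 : ℝ), ∀ n, 1 ≤ n → ∀ ω, Y A n ω = a A ∨ Y A n ω = -b A)
    -- … and are i.i.d. under `P γ A`
    (hindep : ∀ (γ : ι) (A : ℝ),
      iIndepFun (fun n : ℕ => Y A (n + 1)) (P γ A))
    (hident : ∀ (γ : ι) (A : ℝ), ∀ n, 1 ≤ n → (P γ A).map (Y A n) = (P γ A).map (Y A 1))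
    -- with `α̃_γ = P_γ(Y_1 = a)` satisfying `sup_γ α̃_γ = e^{-(1+o(1))a}` as `A → ∞`:
    (halpha : Tendsto
      (fun A => Real.log (⨆ γ : ι, ((P γ A) {ω | Y A 1 ω = a A}).toReal) / (-a A))
      atTop (nhds 1)) :
    -- conclusion: for every `δ > 0` there is `A₀` with, for all `A ≥ A₀`, `ρ ∈ [ε,1]`, `γ`:
    ∀ δ > (0 : ℝ), ∃ A₀ : ℝ, ∀ A ≥ A₀, ∀ ρ ∈ Set.Icc ε 1, ∀ γ : ι,
      (P γ A) {ω | ∃ N, 1 ≤ N ∧ ρ * A ≤ ∑ n ∈ Finset.Icc 1 N, Y A n ω}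
        ≤ ENNReal.ofReal (Real.exp (-((1 - δ) * ρ * A))) :=
  lts_local_exponential_bound_general ε hε a b ha hb P Y hYmeas hvals hindep hident halpha
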